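/- arXiv:2103.08081 — 3 statements merged into one kernel-verified Lean document; each statement's English description precedes it below -/
import Mathlib

section
/- Let ξ ⊆ E be an edge subset, t a sink node, and r an integer with mincut(ξ, t) ≤ r ≤ C_t, where C_t is the minimum cut capacity separating t from the source s. Then there exists an edge subset η ⊆ E of size r that is primary for t and that separates t from ξ. -/
open Finset Matrix

/-- `l` is a nonempty directed trail: consecutive edges are adjacent. -/
def IsTrail {V E : Type*} (tail head : E → V) (l : List E) : Prop :=
  l ≠ [] ∧ l.Chain' (fun a b => head a = tail b)

/-- A directed path from the edge `e` to the node `t`. -/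
def EPath {V E : Type*} (tail head : E → V) (e : E) (t : V) (l : List E) : Prop :=
  IsTrail tail head l ∧ l.head? = some e ∧ ∃ f, l.getLast? = some f ∧ head f = t

/-- A directed path from the node `s` to the node `t`. -/
def NPath {V E : Type*} (tail head : E → V) (s t : V) (l : List E) : Prop :=
  IsTrail tail head l ∧ (∃ f, l.head? = some f ∧ tail f = s) ∧
    ∃ g, l.getLast? = some g ∧ head g = t

/-- `A` is a cut separating the node `t` from the edge subset `ξ`: every directed path
from an edge of `ξ` to `t` meets `A`. -/
def SeparatesF {V E : Type*} (tail head : E → V) (ξ : Finset E) (t : V) (A : Finset E) : Prop :=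
  ∀ e ∈ ξ, ∀ l : List E, EPath tail head e t l → ∃ a ∈ A, a ∈ l

/-- `A` is a cut separating the node `t` from the node `s`. -/
def SeparatesN {V E : Type*} (tail head : E → V) (s t : V) (A : Finset E) : Prop :=
  ∀ l : List E, NPath tail head s t l → ∃ a ∈ A, a ∈ l

/-- Minimum cut capacity separating `t` from the edge subset `ξ`. -/
noncomputable def mincutE {V E : Type*} (tail head : E → V) (ξ : Finset E) (t : V) : ℕ :=
  sInf {n | ∃ A : Finset E, SeparatesF tail head ξ t A ∧ A.card = n}

/-- Minimum cut capacity separating `t` from the node `s`. -/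
noncomputable def mincutN {V E : Type*} (tail head : E → V) (s t : V) : ℕ :=
  sInf {n | ∃ A : Finset E, SeparatesN tail head s t A ∧ A.card = n}

/-- `A` is a minimum cut separating `t` from `ξ`. -/
def IsMinCut {V E : Type*} (tail head : E → V) (ξ : Finset E) (t : V) (A : Finset E) : Prop :=
  SeparatesF tail head ξ t A ∧ A.card = mincutE tail head ξ t

/-- `A` is the primary minimum cut separating `t` from `ξ`: a minimum cut that separates
`t` from every minimum cut separating `t` from `ξ`. -/
def IsPrimaryMinCut {V E : Type*} (tail head : E → V) (ξ : Finset E) (t : V) (A : Finset E) :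
    Prop :=
  IsMinCut tail head ξ t A ∧ ∀ B : Finset E, IsMinCut tail head ξ t B → SeparatesF tail head B t A

/-- `η` is primary for `t`: `η` is the primary minimum cut separating `t` from `η` itself. -/
def PrimaryFor {V E : Type*} (tail head : E → V) (η : Finset E) (t : V) : Prop :=
  IsPrimaryMinCut tail head η t η

/-- The directed graph is acyclic: there is a topological order on the edges. -/
def Acyclic {V E : Type*} (tail head : E → V) : Prop :=
  ∃ f : E → ℕ, ∀ d e, head d = tail e → f d < f e


/-!
Minimum cuts separating `t` from `ξ` can be uncrossed. For two of them, `A` and `B`, let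
`cutJoin A B` consist of the common edges and the edges of `A ∪ B` from which `t` is reachable
avoiding `A` or `B`, and `cutMeet A B` of the remaining edges of `A ∪ B`. On a path from `ξ` to
`t`, the last edge of `A ∪ B` lies in the join and the first one in the meet, so both separate
`t` from `ξ`, and their sizes add up to `|A| + |B|`: both are minimum cuts. Hence the minimum
cut `A` from which the fewest edges reach `t` separates `t` from every other minimum cut `B`,
since the join of `A` and `B` separates `t` from `B` and reaches `t` from no more edges than `A`.
This primary minimum cut of `ξ` is primary for itself, as every cut of it is a cut of `ξ`.

To get size `r`, add the edges leaving `s` to `ξ` one at a time: the minimum cut grows by at most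
one per step, from `mincut(ξ, t) ≤ r` to at least `C_t ≥ r`, so some `ζ ⊇ ξ` has
`mincut(ζ, t) = r`, and the primary minimum cut of `ζ` is the required `η`.
-/

section

variable {V E : Type*} {tail head : E → V} {t : V}

lemma ePath_cons_iff {e x : E} {l : List E} :
    EPath tail head e t (x :: l) ↔
      x = e ∧ (l = [] ∧ head e = t ∨ ∃ e', head e = tail e' ∧ EPath tail head e' t l) := by
  cases l with
  | nil =>
    constructor
    · rintro ⟨-, ⟨⟩, f, ⟨⟩, hf⟩
      exact ⟨rfl, .inl ⟨rfl, hf⟩⟩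
    · rintro ⟨rfl, ⟨-, he⟩ | ⟨e', -, ⟨h, -⟩, -⟩⟩
      · exact ⟨⟨List.cons_ne_nil _ _, List.isChain_singleton _⟩, rfl, x, rfl, he⟩
      · exact absurd rfl h
  | cons y l =>
    constructor
    · rintro ⟨⟨-, hchain⟩, ⟨⟩, hlast⟩
      obtain ⟨hxy, hl⟩ := List.isChain_cons_cons.1 hchain
      exact ⟨rfl, .inr ⟨y, hxy, ⟨List.cons_ne_nil _ _, hl⟩, rfl, hlast⟩⟩
    · rintro ⟨rfl, ⟨h, -⟩ | ⟨e', hxe', ⟨-, hl⟩, ⟨⟩, hlast⟩⟩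
      · cases h
      · exact ⟨⟨List.cons_ne_nil _ _, List.isChain_cons_cons.2 ⟨hxe', hl⟩⟩, rfl, hlast⟩

lemma EPath.cons {d e : E} {l : List E} (hde : head d = tail e) (hl : EPath tail head e t l) :
    EPath tail head d t (d :: l) :=
  ePath_cons_iff.2 ⟨rfl, .inr ⟨e, hde, hl⟩⟩

lemma EPath.head_mem {e : E} {l : List E} (hl : EPath tail head e t l) : e ∈ l := by
  obtain ⟨-, hhead, -⟩ := hl
  exact List.mem_of_mem_head? hhead

lemma EPath.exists_suffix {e c : E} {l : List E} (hl : EPath tail head e t l) (hc : c ∈ l) :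
    ∃ m, EPath tail head c t m ∧ m ⊆ l := by
  induction l generalizing e with
  | nil => simp at hc
  | cons x l ih =>
    obtain ⟨rfl, hrest⟩ := ePath_cons_iff.1 hl
    rcases List.mem_cons.1 hc with rfl | hc
    · exact ⟨_, hl, List.Subset.refl _⟩
    · rcases hrest with ⟨rfl, -⟩ | ⟨e', -, hl'⟩
      · simp at hc
      · obtain ⟨m, hm, hml⟩ := ih hl' hc
        exact ⟨m, hm, fun a ha => List.mem_cons_of_mem _ (hml ha)⟩

variable (tail head t) in
def ReachesAvoiding (A : Finset E) (e : E) : Prop :=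
  ∃ l, EPath tail head e t l ∧ ∀ a ∈ l, a ∉ A

lemma ReachesAvoiding.not_mem {A : Finset E} {e : E} (h : ReachesAvoiding tail head t A e) :
    e ∉ A :=
  let ⟨_, hl, hA⟩ := h
  hA e hl.head_mem

lemma ReachesAvoiding.cons {A : Finset E} {d e : E} (h : ReachesAvoiding tail head t A e)
    (hde : head d = tail e) (hd : d ∉ A) : ReachesAvoiding tail head t A d :=
  let ⟨l, hl, hA⟩ := h
  ⟨d :: l, hl.cons hde, List.forall_mem_cons.2 ⟨hd, hA⟩⟩

lemma separatesF_iff_forall_not_reachesAvoiding {ξ A : Finset E} :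
    SeparatesF tail head ξ t A ↔ ∀ e ∈ ξ, ¬ ReachesAvoiding tail head t A e := by
  simp only [SeparatesF, ReachesAvoiding, not_exists, not_and, not_forall, not_not, exists_prop,
    and_comm]

lemma separatesF_self (ξ : Finset E) : SeparatesF tail head ξ t ξ :=
  fun e he _ hl => ⟨e, he, hl.head_mem⟩

lemma SeparatesF.trans {ξ A D : Finset E} (hA : SeparatesF tail head ξ t A)
    (hD : SeparatesF tail head A t D) : SeparatesF tail head ξ t D := by
  intro e he l hl
  obtain ⟨a, haA, hal⟩ := hA e he l hl
  obtain ⟨m, hm, hml⟩ := hl.exists_suffix hal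
  obtain ⟨d, hdD, hdm⟩ := hD a haA m hm
  exact ⟨d, hdD, hml hdm⟩

/-- `c` is the last edge of `X` on `l`: the rest of `l` leads from `c` to `t` avoiding `X`. -/
lemma EPath.exists_last_mem {X : Finset E} {e : E} {l : List E} (hl : EPath tail head e t l)
    (hX : ∃ a ∈ l, a ∈ X) :
    ∃ c ∈ l, c ∈ X ∧ ∀ Y ⊆ X, c ∉ Y → ReachesAvoiding tail head t Y c := by
  induction l generalizing e with
  | nil => simp at hX
  | cons x l ih =>
    obtain ⟨rfl, hrest⟩ := ePath_cons_iff.1 hl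
    by_cases hlX : ∃ a ∈ l, a ∈ X
    · rcases hrest with ⟨rfl, -⟩ | ⟨e', -, hl'⟩
      · simp at hlX
      · obtain ⟨c, hc, hcX, hcY⟩ := ih hl' hlX
        exact ⟨c, List.mem_cons_of_mem _ hc, hcX, hcY⟩
    · push Not at hlX
      have hxX : x ∈ X := by
        obtain ⟨a, ha, haX⟩ := hX
        rcases List.mem_cons.1 ha with rfl | ha
        · exact haX
        · exact absurd haX (hlX a ha)
      refine ⟨x, List.mem_cons_self, hxX, fun Y hYX hxY => ⟨x :: l, hl, ?_⟩⟩
      exact List.forall_mem_cons.2 ⟨hxY, fun a ha haY => hlX a ha (hYX haY)⟩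

/-- `c` is the first edge of `X` on `l`: the part of `l` before `c` avoids `X`. -/
lemma EPath.exists_first_mem {X : Finset E} {e : E} {l : List E} (hl : EPath tail head e t l)
    (hX : ∃ a ∈ l, a ∈ X) :
    ∃ c ∈ l, c ∈ X ∧ ∀ Y ⊆ X, c ∉ Y → ReachesAvoiding tail head t Y c →
      ReachesAvoiding tail head t Y e := by
  induction l generalizing e with
  | nil => simp at hX
  | cons x l ih =>
    obtain ⟨rfl, hrest⟩ := ePath_cons_iff.1 hl
    by_cases hxX : x ∈ X
    · exact ⟨x, List.mem_cons_self, hxX, fun _ _ _ h => h⟩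
    · have hlX : ∃ a ∈ l, a ∈ X := by
        obtain ⟨a, ha, haX⟩ := hX
        exact ⟨a, (List.mem_cons.1 ha).resolve_left (by rintro rfl; exact hxX haX), haX⟩
      rcases hrest with ⟨rfl, -⟩ | ⟨e', hxe', hl'⟩
      · simp at hlX
      · obtain ⟨c, hc, hcX, hcY⟩ := ih hl' hlX
        exact ⟨c, List.mem_cons_of_mem _ hc, hcX, fun Y hYX hcY' h =>
          (hcY Y hYX hcY' h).cons hxe' fun hxY => hxX (hYX hxY)⟩

section Uncrossing

variable [DecidableEq E]

variable (tail head t) in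
open Classical in
noncomputable def cutJoin (A B : Finset E) : Finset E :=
  A ∩ B ∪ (A ∪ B).filter fun c => ReachesAvoiding tail head t A c ∨ ReachesAvoiding tail head t B c

variable (tail head t) in
open Classical in
noncomputable def cutMeet (A B : Finset E) : Finset E :=
  (A ∪ B).filter fun c => ¬ (ReachesAvoiding tail head t A c ∨ ReachesAvoiding tail head t B c)

lemma mem_cutJoin {A B : Finset E} {c : E} :
    c ∈ cutJoin tail head t A B ↔ c ∈ A ∧ c ∈ B ∨
      (c ∈ A ∨ c ∈ B) ∧ (ReachesAvoiding tail head t A c ∨ ReachesAvoiding tail head t B c) := by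
  simp [cutJoin]

lemma mem_cutMeet {A B : Finset E} {c : E} :
    c ∈ cutMeet tail head t A B ↔ (c ∈ A ∨ c ∈ B) ∧
      ¬ ReachesAvoiding tail head t A c ∧ ¬ ReachesAvoiding tail head t B c := by
  simp [cutMeet]

variable (tail head t) in
lemma card_cutJoin_add_card_cutMeet (A B : Finset E) :
    #(cutJoin tail head t A B) + #(cutMeet tail head t A B) = #A + #B := by
  classical
  have hdisj : Disjoint (A ∩ B) ((A ∪ B).filter fun c =>
      ReachesAvoiding tail head t A c ∨ ReachesAvoiding tail head t B c) := by
    refine disjoint_left.2 fun c hc hc' => ?_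
    rw [mem_inter] at hc
    rcases (mem_filter.1 hc').2 with h | h
    exacts [h.not_mem hc.1, h.not_mem hc.2]
  rw [cutJoin, cutMeet, card_union_of_disjoint hdisj, add_assoc,
    card_filter_add_card_filter_not, add_comm, card_union_add_card_inter]

lemma EPath.exists_mem_cutJoin {A B : Finset E} {e : E} {l : List E}
    (hl : EPath tail head e t l) (hAB : ∃ a ∈ l, a ∈ A ∪ B) :
    ∃ c ∈ l, c ∈ cutJoin tail head t A B := by
  obtain ⟨c, hcl, hcAB, hreach⟩ := hl.exists_last_mem hAB
  refine ⟨c, hcl, mem_cutJoin.2 ?_⟩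
  by_cases hcA : c ∈ A
  · by_cases hcB : c ∈ B
    · exact .inl ⟨hcA, hcB⟩
    · exact .inr ⟨.inl hcA, .inr (hreach B subset_union_right hcB)⟩
  · exact .inr ⟨mem_union.1 hcAB, .inl (hreach A subset_union_left hcA)⟩

lemma SeparatesF.cutJoin {ξ A : Finset E} (hA : SeparatesF tail head ξ t A) (B : Finset E) :
    SeparatesF tail head ξ t (cutJoin tail head t A B) := by
  intro e he l hl
  obtain ⟨a, haA, hal⟩ := hA e he l hl
  obtain ⟨c, hcl, hc⟩ := hl.exists_mem_cutJoin ⟨a, hal, mem_union_left _ haA⟩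
  exact ⟨c, hc, hcl⟩

lemma separatesF_union_cutJoin (A B : Finset E) :
    SeparatesF tail head (A ∪ B) t (cutJoin tail head t A B) := by
  intro e he l hl
  obtain ⟨c, hcl, hc⟩ := hl.exists_mem_cutJoin ⟨e, hl.head_mem, he⟩
  exact ⟨c, hc, hcl⟩

lemma ReachesAvoiding.of_cutJoin {A B : Finset E} {e : E}
    (h : ReachesAvoiding tail head t (cutJoin tail head t A B) e) :
    ReachesAvoiding tail head t A e := by
  obtain ⟨l, hl, hJ⟩ := h
  refine ⟨l, hl, fun a hal haA => ?_⟩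
  obtain ⟨c, hcl, hc⟩ := hl.exists_mem_cutJoin ⟨a, hal, mem_union_left B haA⟩
  exact hJ c hcl hc

lemma SeparatesF.cutMeet {ξ A B : Finset E} (hA : SeparatesF tail head ξ t A)
    (hB : SeparatesF tail head ξ t B) : SeparatesF tail head ξ t (cutMeet tail head t A B) := by
  intro e he l hl
  obtain ⟨a, haA, hal⟩ := hA e he l hl
  obtain ⟨c, hcl, hcAB, hfirst⟩ := hl.exists_first_mem ⟨a, hal, mem_union_left B haA⟩
  refine ⟨c, mem_cutMeet.2 ⟨mem_union.1 hcAB, fun hcA => ?_, fun hcB => ?_⟩, hcl⟩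
  · exact separatesF_iff_forall_not_reachesAvoiding.1 hA e he
      (hfirst A subset_union_left hcA.not_mem hcA)
  · exact separatesF_iff_forall_not_reachesAvoiding.1 hB e he
      (hfirst B subset_union_right hcB.not_mem hcB)

end Uncrossing

lemma mincutE_le {ξ A : Finset E} (hA : SeparatesF tail head ξ t A) :
    mincutE tail head ξ t ≤ #A :=
  Nat.sInf_le ⟨A, hA, rfl⟩

variable (tail head t) in
lemma exists_isMinCut (ξ : Finset E) : ∃ A, IsMinCut tail head ξ t A :=
  Nat.sInf_mem (s := {n | ∃ A, SeparatesF tail head ξ t A ∧ #A = n})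
    ⟨#ξ, ξ, separatesF_self ξ, rfl⟩

lemma IsMinCut.cutJoin [DecidableEq E] {ξ A B : Finset E} (hA : IsMinCut tail head ξ t A)
    (hB : IsMinCut tail head ξ t B) : IsMinCut tail head ξ t (cutJoin tail head t A B) := by
  obtain ⟨hAsep, hAcard⟩ := hA
  obtain ⟨hBsep, hBcard⟩ := hB
  have hJ := mincutE_le (hAsep.cutJoin B)
  have hM := mincutE_le (hAsep.cutMeet hBsep)
  have hsum := card_cutJoin_add_card_cutMeet tail head t A B
  exact ⟨hAsep.cutJoin B, by omega⟩

variable (tail head t) in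
lemma exists_isPrimaryMinCut [Fintype E] (ξ : Finset E) :
    ∃ A, IsPrimaryMinCut tail head ξ t A := by
  classical
  let reachSet (A : Finset E) : Finset E := univ.filter (ReachesAvoiding tail head t A)
  obtain ⟨A, hA, hmin⟩ :=
    (univ.filter (IsMinCut tail head ξ t)).exists_min_image (fun A => #(reachSet A))
    (let ⟨A, hA⟩ := exists_isMinCut tail head t ξ; ⟨A, by simpa using hA⟩)
  rw [mem_filter] at hA
  refine ⟨A, hA.2, fun B hB => ?_⟩
  -- Passing to the join can only shrink the set of edges reaching `t`; by minimality it does not.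
  have hreach : reachSet (cutJoin tail head t A B) = reachSet A :=
    eq_of_subset_of_card_le (fun e he => by simpa [reachSet] using (mem_filter.1 he).2.of_cutJoin)
      (hmin _ (by simpa using hA.2.cutJoin hB))
  rw [separatesF_iff_forall_not_reachesAvoiding]
  intro b hb hbA
  have hbJ : b ∈ reachSet (cutJoin tail head t A B) := by simpa [hreach, reachSet] using hbA
  exact separatesF_iff_forall_not_reachesAvoiding.1 (separatesF_union_cutJoin A B) b
    (mem_union_right _ hb) (mem_filter.1 hbJ).2

lemma IsPrimaryMinCut.primaryFor {ξ A : Finset E} (hA : IsPrimaryMinCut tail head ξ t A) :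
    PrimaryFor tail head A t := by
  obtain ⟨⟨hAsep, hAcard⟩, hAprimary⟩ := hA
  have hcard : #A = mincutE tail head A t := by
    obtain ⟨D, hD, hDcard⟩ := exists_isMinCut tail head t A
    have := mincutE_le (hAsep.trans hD)
    have := mincutE_le (separatesF_self A : SeparatesF tail head A t A)
    omega
  refine ⟨⟨separatesF_self A, hcard⟩, fun B hB => hAprimary B ⟨hAsep.trans hB.1, ?_⟩⟩
  rw [hB.2, ← hcard, hAcard]

variable (tail head t) in
lemma mincutE_insert_le [DecidableEq E] (ξ : Finset E) (e : E) :
    mincutE tail head (insert e ξ) t ≤ mincutE tail head ξ t + 1 := by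
  obtain ⟨D, hD, hDcard⟩ := exists_isMinCut tail head t ξ
  have hsep : SeparatesF tail head (insert e ξ) t (insert e D) := by
    intro x hx l hl
    rcases mem_insert.1 hx with rfl | hx
    · exact ⟨x, mem_insert_self _ _, hl.head_mem⟩
    · obtain ⟨a, ha, hal⟩ := hD x hx l hl
      exact ⟨a, mem_insert_of_mem ha, hal⟩
  calc mincutE tail head (insert e ξ) t ≤ #(insert e D) := mincutE_le hsep
    _ ≤ #D + 1 := card_insert_le _ _
    _ = mincutE tail head ξ t + 1 := by rw [hDcard]

lemma mincutN_le_mincutE {s : V} {ζ : Finset E} (hζ : ∀ e, tail e = s → e ∈ ζ) :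
    mincutN tail head s t ≤ mincutE tail head ζ t := by
  obtain ⟨D, hD, hDcard⟩ := exists_isMinCut tail head t ζ
  rw [← hDcard]
  exact Nat.sInf_le ⟨D, fun l ⟨htrail, ⟨f, hf, hfs⟩, hlast⟩ =>
    hD f (hζ f hfs) l ⟨htrail, hf, hlast⟩, rfl⟩

lemma exists_superset_apply_eq_of_le_of_le {α : Type*} [DecidableEq α] {f : Finset α → ℕ}
    (hf : ∀ X a, f (insert a X) ≤ f X + 1) {ξ : Finset α} {r : ℕ} (h1 : f ξ ≤ r)
    (S : Finset α) (h2 : r ≤ f (ξ ∪ S)) : ∃ ζ, ξ ⊆ ζ ∧ f ζ = r := by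
  induction S using Finset.induction_on with
  | empty => exact ⟨ξ, subset_rfl, le_antisymm h1 (by simpa using h2)⟩
  | insert a S _ ih =>
    by_cases hS : r ≤ f (ξ ∪ S)
    · exact ih hS
    · rw [union_insert] at h2
      have := hf (ξ ∪ S) a
      exact ⟨insert a (ξ ∪ S), subset_union_left.trans (subset_insert _ _), by omega⟩

end

theorem stmt1_general {V E : Type*} [Fintype E] (tail head : E → V)
    (s t : V) (ξ : Finset E) (r : ℕ)
    (h1 : mincutE tail head ξ t ≤ r) (h2 : r ≤ mincutN tail head s t) :
    ∃ η : Finset E, η.card = r ∧ PrimaryFor tail head η t ∧ SeparatesF tail head ξ t η := by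
  classical
  have hsrc : r ≤ mincutE tail head (ξ ∪ univ.filter (tail · = s)) t :=
    h2.trans (mincutN_le_mincutE fun e he => by simp [he])
  obtain ⟨ζ, hξζ, hζ⟩ := exists_superset_apply_eq_of_le_of_le (f := (mincutE tail head · t))
    (mincutE_insert_le tail head t) h1 _ hsrc
  obtain ⟨η, hη⟩ := exists_isPrimaryMinCut tail head t ζ
  exact ⟨η, hη.1.2.trans hζ, hη.primaryFor, fun e he => hη.1.1 e (hξζ he)⟩

/-- For an edge subset `ξ`, a sink node `t` and an integer `r` with
`mincut(ξ,t) ≤ r ≤ C_t` (where `C_t` is the minimum cut capacity separating `t` from the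
source `s`), there exists a size-`r` edge subset `η` that is primary for `t` and
separates `t` from `ξ`. -/
theorem stmt1 {V E : Type*} [Fintype E] [DecidableEq E] (tail head : E → V)
    (hacyc : Acyclic tail head) (s t : V) (ξ : Finset E) (r : ℕ)
    (h1 : mincutE tail head ξ t ≤ r) (h2 : r ≤ mincutN tail head s t) :
    ∃ η : Finset E, η.card = r ∧ PrimaryFor tail head η t ∧ SeparatesF tail head ξ t η :=
  stmt1_general tail head s t ξ r h1 h2
end

section
/- The minimum distance of an LNEC code at sink t satisfies d_min^(t) = min{|ρ| : ρ ⊆ E, Φ(t) ∩ Δ(t,ρ) ≠ {0}}, where d_min^(t) is defined as the minimum of d^(t)(x·F_t, x'·F_t) over distinct x, x' ∈ F_q^ω. That is, the codeword-pair definition of minimum distance coincides with the subspace-intersection definition. -/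
/-! Since `Ft` has full row rank, `x ↦ x ᵥ* Ft` is injective, so pairs `x ≠ x'` correspond to
nonzero messages `(x - x') ᵥ* Ft`; and `edist Gt y y'` only sees `y - y'`. Hence every pair
distance is the size of a support witnessing `Φ(t) ∩ Δ(t,ρ) ≠ {0}`, and every such witness
bounds the distance of the pair `(x, 0)`, so the two infima coincide. -/

open Finset Matrix

/-- The LNEC distance at a sink node: the minimum size of an edge subset `ρ` supporting an
error vector `z` with `y - y' = z · Gt`. -/
noncomputable def edist {F E ι : Type*} [Field F] [Fintype E] [Fintype ι]
    (Gt : Matrix E ι F) (y y' : ι → F) : ℕ :=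
  sInf {n | ∃ ρ : Finset E, ρ.card = n ∧
    ∃ z : E → F, (∀ e ∉ ρ, z e = 0) ∧ y - y' = z ᵥ* Gt}

theorem Matrix.vecMul_injective_of_rank_eq_card {m n R : Type*} [Field R] [Fintype m]
    [Fintype n] {M : Matrix m n R} (h : M.rank = Fintype.card m) :
    Function.Injective (· ᵥ* M) := by
  rw [vecMul_injective_iff, linearIndependent_iff_card_eq_finrank_span, Set.finrank,
    ← rank_eq_finrank_span_row, h]

section edist

variable {F E ι : Type*} [Field F] [Fintype E] [Fintype ι] {Gt : Matrix E ι F} {y y' : ι → F}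

theorem edist_le_card {ρ : Finset E} {z : E → F} (hz : ∀ e ∉ ρ, z e = 0)
    (h : y - y' = z ᵥ* Gt) : edist Gt y y' ≤ ρ.card :=
  Nat.sInf_le ⟨ρ, rfl, z, hz, h⟩

/-- Without such a `z` the defining set is empty and `edist` takes the junk value `0`. -/
theorem exists_card_eq_edist (h : ∃ z : E → F, z ᵥ* Gt = y - y') :
    ∃ ρ : Finset E, ρ.card = edist Gt y y' ∧
      ∃ z : E → F, (∀ e ∉ ρ, z e = 0) ∧ y - y' = z ᵥ* Gt := by
  obtain ⟨z, hz⟩ := h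
  exact Nat.sInf_mem (s := {n | ∃ ρ : Finset E, ρ.card = n ∧
      ∃ z : E → F, (∀ e ∉ ρ, z e = 0) ∧ y - y' = z ᵥ* Gt})
    ⟨_, univ, rfl, z, fun e he ↦ absurd (mem_univ e) he, hz.symm⟩

end edist

theorem stmt6_general {F E ι : Type*} [Field F] [Fintype E] [Fintype ι] {ω : ℕ}
    (Ft : Matrix (Fin ω) ι F) (Gt : Matrix E ι F)
    (hrank : Ft.rank = ω)
    (hsurj : ∀ y : ι → F, ∃ z : E → F, z ᵥ* Gt = y) :
    sInf {n | ∃ x x' : Fin ω → F, x ≠ x' ∧ edist Gt (x ᵥ* Ft) (x' ᵥ* Ft) = n} =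
      sInf {n | ∃ ρ : Finset E, ρ.card = n ∧
        ∃ v : ι → F, v ≠ 0 ∧ (∃ x : Fin ω → F, v = x ᵥ* Ft) ∧
          ∃ z : E → F, (∀ e ∉ ρ, z e = 0) ∧ v = z ᵥ* Gt} := by
  have hinj : Function.Injective (· ᵥ* Ft) :=
    vecMul_injective_of_rank_eq_card (by rw [hrank, Fintype.card_fin])
  apply csInf_eq_csInf_of_forall_exists_le
  · rintro _ ⟨x, x', hxx', rfl⟩
    obtain ⟨ρ, hρ, z, hz, hdiff⟩ := exists_card_eq_edist (hsurj _)
    have hv : (x - x') ᵥ* Ft ≠ 0 := by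
      rw [sub_vecMul, sub_ne_zero]
      exact hinj.ne hxx'
    exact ⟨_, ⟨ρ, hρ, _, hv, ⟨x - x', rfl⟩, z, hz, by rw [sub_vecMul, hdiff]⟩, le_rfl⟩
  · rintro _ ⟨ρ, rfl, v, hv, ⟨x, rfl⟩, z, hz, hvz⟩
    have hx : x ≠ 0 := by
      rintro rfl
      exact hv (zero_vecMul Ft)
    exact ⟨_, ⟨x, 0, hx, rfl⟩, edist_le_card hz (by rw [zero_vecMul, sub_zero, hvz])⟩

/-- The codeword-pair definition of the minimum distance of an LNEC code at sink `t`
coincides with the subspace-intersection definition: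
`d_min^(t) = min{|ρ| : Φ(t) ∩ Δ(t,ρ) ≠ {0}}`. -/
theorem stmt6 {F E ι : Type*} [Field F] [Fintype F] [Fintype E] [Fintype ι]
    [DecidableEq E] [DecidableEq ι] {ω : ℕ}
    (Ft : Matrix (Fin ω) ι F) (Gt : Matrix E ι F)
    (hrank : Ft.rank = ω)
    (hsurj : ∀ y : ι → F, ∃ z : E → F, z ᵥ* Gt = y) :
    sInf {n | ∃ x x' : Fin ω → F, x ≠ x' ∧ edist Gt (x ᵥ* Ft) (x' ᵥ* Ft) = n} =
      sInf {n | ∃ ρ : Finset E, ρ.card = n ∧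
        ∃ v : ι → F, v ≠ 0 ∧ (∃ x : Fin ω → F, v = x ᵥ* Ft) ∧
          ∃ z : E → F, (∀ e ∉ ρ, z e = 0) ∧ v = z ᵥ* Gt} :=
  stmt6_general Ft Gt hrank hsurj
end

section
/- Let an LNEC code at a sink node t have rank(F_t) = ω and minimum distance d_min^(t). Then the code corrects any error vector of Hamming weight at most ⌊(d_min^(t) − 1)/2⌋ at t: if (x_1, z_1) and (x_2, z_2) are pairs of source message and error vectors with w_H(z_i) ≤ ⌊(d_min^(t) − 1)/2⌋ and x_1·F_t + z_1·G_t = x_2·F_t + z_2·G_t, then x_1 = x_2. -/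
open Finset Matrix

/-- Minimum distance of an LNEC code at a sink node:
`d_min^(t) = min{|ρ| : Φ(t) ∩ Δ(t,ρ) ≠ {0}}`, where `Φ(t)` is the row space of `Ft` and
`Δ(t,ρ)` is the span of the rows of `Gt` indexed by `ρ`. -/
noncomputable def dminLNEC {F E ι : Type*} [Field F] [Fintype E] [Fintype ι] {ω : ℕ}
    (Ft : Matrix (Fin ω) ι F) (Gt : Matrix E ι F) : ℕ :=
  sInf {n | ∃ ρ : Finset E, ρ.card = n ∧
    ∃ v : ι → F, v ≠ 0 ∧ (∃ x : Fin ω → F, v = x ᵥ* Ft) ∧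
      ∃ z : E → F, (∀ e ∉ ρ, z e = 0) ∧ v = z ᵥ* Gt}

/-- Full row rank implies `vecMul` is injective on the left. -/
lemma vecMul_eq_zero_of_rank {F ι : Type*} [Field F] [Fintype ι] [DecidableEq ι] {ω : ℕ}
    (Ft : Matrix (Fin ω) ι F) (hrank : Ft.rank = ω) {x : Fin ω → F}
    (hx : x ᵥ* Ft = 0) : x = 0 := by
  have hT : (Ftᵀ).rank = ω := by rw [Matrix.rank_transpose]; exact hrank
  have hker : LinearMap.ker (Ftᵀ).mulVecLin = ⊥ := by
    have h1 : Module.finrank F (LinearMap.range (Ftᵀ).mulVecLin) = ω := hT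
    have h2 := LinearMap.finrank_range_add_finrank_ker (Ftᵀ).mulVecLin
    rw [h1] at h2
    have h3 : Module.finrank F (Fin ω → F) = ω := by simp
    rw [h3] at h2
    have : Module.finrank F (LinearMap.ker (Ftᵀ).mulVecLin) = 0 := by omega
    exact Submodule.finrank_eq_zero.mp this
  have : x ∈ LinearMap.ker (Ftᵀ).mulVecLin := by
    simp only [LinearMap.mem_ker, Matrix.mulVecLin_apply, Matrix.mulVec_transpose]
    exact hx
  rw [hker] at this
  simpa using this

/-- An LNEC code with `rank(F_t) = ω` corrects any error vector of Hamming weight at most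
`⌊(d_min^(t) − 1)/2⌋` at the sink `t`: two (message, error) pairs with such errors and
equal received vectors have equal messages. -/
theorem stmt7 {F E ι : Type*} [Field F] [Fintype F] [DecidableEq F] [Fintype E] [Fintype ι]
    [DecidableEq E] [DecidableEq ι] {ω : ℕ}
    (Ft : Matrix (Fin ω) ι F) (Gt : Matrix E ι F)
    (hrank : Ft.rank = ω)
    (x₁ x₂ : Fin ω → F) (z₁ z₂ : E → F)
    (hw₁ : (Finset.univ.filter (fun e => z₁ e ≠ 0)).card ≤ (dminLNEC Ft Gt - 1) / 2)
    (hw₂ : (Finset.univ.filter (fun e => z₂ e ≠ 0)).card ≤ (dminLNEC Ft Gt - 1) / 2)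
    (heq : x₁ ᵥ* Ft + z₁ ᵥ* Gt = x₂ ᵥ* Ft + z₂ ᵥ* Gt) :
    x₁ = x₂ := by
  by_contra hx
  set d := dminLNEC Ft Gt with hd
  set z : E → F := z₂ - z₁ with hz
  set v : ι → F := (x₁ - x₂) ᵥ* Ft with hv
  have hveq : v = z ᵥ* Gt := by
    rw [hv, hz, Matrix.sub_vecMul, Matrix.sub_vecMul]
    have := congrFun heq
    funext i
    have h := this i
    simp only [Pi.add_apply] at h
    simp only [Pi.sub_apply]
    linear_combination h
  have hvne : v ≠ 0 := by
    intro h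
    apply hx
    have := vecMul_eq_zero_of_rank Ft hrank (hv ▸ h)
    have h2 : x₁ - x₂ = 0 := this
    funext i
    have := congrFun h2 i
    simp only [Pi.sub_apply, Pi.zero_apply, sub_eq_zero] at this
    exact this
  set ρ : Finset E := Finset.univ.filter (fun e => z e ≠ 0) with hρ
  have hmem : ρ.card ∈ {n | ∃ ρ : Finset E, ρ.card = n ∧
      ∃ v : ι → F, v ≠ 0 ∧ (∃ x : Fin ω → F, v = x ᵥ* Ft) ∧
        ∃ z : E → F, (∀ e ∉ ρ, z e = 0) ∧ v = z ᵥ* Gt} := by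
    refine ⟨ρ, rfl, v, hvne, ⟨x₁ - x₂, hv⟩, z, ?_, hveq⟩
    intro e he
    simp only [hρ, Finset.mem_filter, Finset.mem_univ, true_and, not_not] at he
    exact he
  have hdle : d ≤ ρ.card := Nat.sInf_le hmem
  have hsub : ρ ⊆ (Finset.univ.filter (fun e => z₁ e ≠ 0)) ∪
      (Finset.univ.filter (fun e => z₂ e ≠ 0)) := by
    intro e he
    simp only [hρ, hz, Finset.mem_filter, Finset.mem_univ, true_and, Pi.sub_apply] at he
    simp only [Finset.mem_union, Finset.mem_filter, Finset.mem_univ, true_and]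
    by_contra hc
    push_neg at hc
    simp [hc.1, hc.2] at he
  have hcard : ρ.card ≤ (d - 1) / 2 + (d - 1) / 2 := by
    calc ρ.card ≤ _ := Finset.card_le_card hsub
    _ ≤ _ := Finset.card_union_le _ _
    _ ≤ (d - 1) / 2 + (d - 1) / 2 := Nat.add_le_add hw₁ hw₂
  have hhalf : (d - 1) / 2 + (d - 1) / 2 ≤ d - 1 := by omega
  have hρne : 1 ≤ ρ.card := by
    rcases Finset.eq_empty_or_nonempty ρ with h | h
    · exfalso
      apply hvne
      have hz0 : z = 0 := by
        funext e
        simp only [Pi.zero_apply]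
        by_contra hze
        have : e ∈ ρ := by simp [hρ, hze]
        simp [h] at this
      rw [hveq, hz0, Matrix.zero_vecMul]
    · exact Finset.card_pos.mpr h
  omega
end
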